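/- In the generalized Gaussian spin model, if the limiting free energy p(γ) = lim_N E[ψ_N(γ)] exists for all γ in a neighborhood of γ₀ and is differentiable at γ₀, and |A_N| = O(N), then E|⟨H⟩ − ν(H)| → 0 as N → ∞, where H = (1/N) Σ_{α ∈ A_N} g_α f_α and ν(H) = E⟨H⟩. -/

import Mathlib

/-!
The Gibbs average of `H` is the derivative at `γ₀` of the random convex function
`ψ_N(γ) = N⁻¹ log Z_N(γ)`, so it is squeezed between the difference quotients of `ψ_N` at
`γ₀ ± δ`. As a function of the Gaussian disorder, `ψ_N(γ)` is `|γ|/N`-Lipschitz in each of the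
`|A_N| = O(N)` coordinates, so by the Efron–Stein inequality its variance is `O(1/N)`. Hence the
difference quotients concentrate around those of `p_N = E ψ_N`, which converge to those of `p`,
and these tend to `p'(γ₀)` as `δ → 0`.
-/

open MeasureTheory ProbabilityTheory Filter Topology Set

noncomputable section

section Gibbs

variable {τ : Type*} [Fintype τ]

def partitionFn (κ H : τ → ℝ) (γ : ℝ) : ℝ := ∑ σ, κ σ * Real.exp (γ * H σ)

def gibbsAvg (κ H : τ → ℝ) (γ : ℝ) (X : τ → ℝ) : ℝ :=
  (∑ σ, κ σ * Real.exp (γ * H σ) * X σ) / partitionFn κ H γ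

lemma gibbsAvg_const_mul (κ H : τ → ℝ) (γ c : ℝ) (X : τ → ℝ) :
    gibbsAvg κ H γ (fun σ => c * X σ) = c * gibbsAvg κ H γ X := by
  simp only [gibbsAvg, Finset.mul_sum, mul_div_assoc']
  congr 1
  exact Finset.sum_congr rfl fun σ _ => by ring

lemma hasDerivAt_sum_mul_exp (κ H X : τ → ℝ) (γ : ℝ) :
    HasDerivAt (fun γ => ∑ σ, κ σ * Real.exp (γ * H σ) * X σ)
      (∑ σ, κ σ * Real.exp (γ * H σ) * (H σ * X σ)) γ := by
  refine HasDerivAt.fun_sum fun σ _ => ?_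
  exact ((((hasDerivAt_mul_const (H σ)).exp).const_mul (κ σ)).mul_const (X σ)).congr_deriv
    (by ring)

lemma hasDerivAt_partitionFn (κ H : τ → ℝ) (γ : ℝ) :
    HasDerivAt (partitionFn κ H) (∑ σ, κ σ * Real.exp (γ * H σ) * H σ) γ := by
  have := hasDerivAt_sum_mul_exp κ H (fun _ => 1) γ
  simp only [mul_one] at this
  exact this

lemma partitionFn_le_exp_mul {κ H H' : τ → ℝ} (hκ0 : ∀ σ, 0 ≤ κ σ) {M : ℝ}
    (hM : ∀ σ, |H σ - H' σ| ≤ M) (γ : ℝ) :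
    partitionFn κ H γ ≤ Real.exp (|γ| * M) * partitionFn κ H' γ := by
  rw [partitionFn, partitionFn, Finset.mul_sum]
  refine Finset.sum_le_sum fun σ _ => ?_
  have hexp : γ * H σ ≤ |γ| * M + γ * H' σ := by
    have h1 : γ * (H σ - H' σ) ≤ |γ| * M := (le_abs_self _).trans
      (by rw [abs_mul]; exact mul_le_mul_of_nonneg_left (hM σ) (abs_nonneg γ))
    linarith [mul_sub γ (H σ) (H' σ)]
  calc κ σ * Real.exp (γ * H σ) ≤ κ σ * Real.exp (|γ| * M + γ * H' σ) :=
        mul_le_mul_of_nonneg_left (Real.exp_le_exp.2 hexp) (hκ0 σ)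
    _ = _ := by rw [Real.exp_add]; ring

variable {κ : τ → ℝ} (hκ0 : ∀ σ, 0 ≤ κ σ) (hκ1 : ∑ σ, κ σ = 1)
include hκ0 hκ1

lemma partitionFn_pos (H : τ → ℝ) (γ : ℝ) : 0 < partitionFn κ H γ := by
  obtain ⟨σ, -, hσ⟩ : ∃ σ ∈ Finset.univ, (0 : τ → ℝ) σ < κ σ :=
    Finset.exists_lt_of_sum_lt (by simp [hκ1])
  exact Finset.sum_pos' (fun σ _ => mul_nonneg (hκ0 σ) (Real.exp_pos _).le)
    ⟨σ, Finset.mem_univ σ, mul_pos hσ (Real.exp_pos _)⟩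

lemma hasDerivAt_log_partitionFn (H : τ → ℝ) (γ : ℝ) :
    HasDerivAt (fun γ => Real.log (partitionFn κ H γ)) (gibbsAvg κ H γ H) γ :=
  (hasDerivAt_partitionFn κ H γ).log (partitionFn_pos hκ0 hκ1 H γ).ne'

lemma hasDerivAt_gibbsAvg_self (H : τ → ℝ) (γ : ℝ) :
    HasDerivAt (fun γ => gibbsAvg κ H γ H)
      (gibbsAvg κ H γ (fun σ => H σ ^ 2) - gibbsAvg κ H γ H ^ 2) γ := by
  have hZ0 := (partitionFn_pos hκ0 hκ1 H γ).ne'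
  refine ((hasDerivAt_sum_mul_exp κ H H γ).div (hasDerivAt_partitionFn κ H γ) hZ0).congr_deriv ?_
  simp only [gibbsAvg, partitionFn, sq]
  field_simp

/-- The second derivative of `log Z` is the Gibbs variance of `H`, nonnegative by
Cauchy–Schwarz. -/
lemma convexOn_log_partitionFn (H : τ → ℝ) :
    ConvexOn ℝ univ (fun γ => Real.log (partitionFn κ H γ)) := by
  refine convexOn_of_hasDerivWithinAt2_nonneg convex_univ
    (fun γ _ => (hasDerivAt_log_partitionFn hκ0 hκ1 H γ).continuousAt.continuousWithinAt)
    (fun γ _ => (hasDerivAt_log_partitionFn hκ0 hκ1 H γ).hasDerivWithinAt)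
    (fun γ _ => (hasDerivAt_gibbsAvg_self hκ0 hκ1 H γ).hasDerivWithinAt) fun γ _ => ?_
  have hZ := partitionFn_pos hκ0 hκ1 H γ
  have hw : ∀ σ, 0 ≤ κ σ * Real.exp (γ * H σ) := fun σ => mul_nonneg (hκ0 σ) (Real.exp_pos _).le
  have hCS := Finset.sum_sq_le_sum_mul_sum_of_sq_le_mul Finset.univ (fun σ _ => hw σ)
    (fun σ _ => mul_nonneg (hw σ) (sq_nonneg (H σ)))
    (r := fun σ => κ σ * Real.exp (γ * H σ) * H σ) fun σ _ => by ring_nf; rfl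
  have hvar : gibbsAvg κ H γ (fun σ => H σ ^ 2) - gibbsAvg κ H γ H ^ 2
      = (partitionFn κ H γ * ∑ σ, κ σ * Real.exp (γ * H σ) * H σ ^ 2
        - (∑ σ, κ σ * Real.exp (γ * H σ) * H σ) ^ 2) / partitionFn κ H γ ^ 2 := by
    simp only [gibbsAvg]
    field_simp
  rw [hvar]
  exact div_nonneg (sub_nonneg.2 hCS) (sq_nonneg _)

lemma abs_log_partitionFn_sub_le {H H' : τ → ℝ} {M : ℝ} (hM : ∀ σ, |H σ - H' σ| ≤ M) (γ : ℝ) :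
    |Real.log (partitionFn κ H γ) - Real.log (partitionFn κ H' γ)| ≤ |γ| * M := by
  have key : ∀ {H H' : τ → ℝ}, (∀ σ, |H σ - H' σ| ≤ M) →
      Real.log (partitionFn κ H γ) ≤ Real.log (partitionFn κ H' γ) + |γ| * M := by
    intro H H' hM
    calc Real.log (partitionFn κ H γ)
        ≤ Real.log (Real.exp (|γ| * M) * partitionFn κ H' γ) :=
          Real.log_le_log (partitionFn_pos hκ0 hκ1 H γ) (partitionFn_le_exp_mul hκ0 hM γ)
      _ = _ := by
          rw [Real.log_mul (Real.exp_pos _).ne' (partitionFn_pos hκ0 hκ1 H' γ).ne', Real.log_exp,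
            add_comm]
  rw [abs_sub_le_iff]
  exact ⟨by linarith [key hM],
    by linarith [key fun σ => (abs_sub_comm (H' σ) (H σ)).le.trans (hM σ)]⟩

lemma abs_log_partitionFn_le {H : τ → ℝ} {M : ℝ} (hM : ∀ σ, |H σ| ≤ M) (γ : ℝ) :
    |Real.log (partitionFn κ H γ)| ≤ |γ| * M := by
  have h0 : partitionFn κ 0 γ = 1 := by simp [partitionFn, hκ1]
  simpa [h0] using abs_log_partitionFn_sub_le hκ0 hκ1 (H' := 0) (by simpa using hM) γ

end Gibbs

lemma MeasureTheory.MeasurePreserving.integral_comp_of_aestronglyMeasurable {α β : Type*}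
    [MeasurableSpace α] [MeasurableSpace β] {μ : Measure α} {ν : Measure β} {T : α → β}
    (hT : MeasurePreserving T μ ν) {f : β → ℝ} (hf : AEStronglyMeasurable f ν) :
    ∫ x, f (T x) ∂μ = ∫ y, f y ∂ν := by
  rw [← hT.map_eq] at hf ⊢
  exact (integral_map hT.measurable.aemeasurable hf).symm

lemma two_mul_integral_mul_eq_of_comp_eq_neg {α : Type*} [MeasurableSpace α] {μ : Measure α}
    {T : α → α} (hT : MeasurePreserving T μ μ) {G D : α → ℝ} (hD : ∀ x, D (T x) = -D x)
    (hGD : Integrable (fun x => G x * D x) μ) :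
    2 * ∫ x, G x * D x ∂μ = ∫ x, (G x - G (T x)) * D x ∂μ := by
  have hGTD : Integrable (fun x => G (T x) * D x) μ := by
    refine ((hT.integrable_comp hGD.aestronglyMeasurable).2 hGD).neg.congr (.of_forall fun x => ?_)
    simp [hD]
  have hswap : ∫ x, G (T x) * D x ∂μ = -∫ x, G x * D x ∂μ := by
    rw [← hT.integral_comp_of_aestronglyMeasurable hGD.aestronglyMeasurable, ← integral_neg]
    simp [hD]
  simp only [sub_mul]
  rw [integral_sub hGD hGTD, hswap]
  ring

lemma measurePreserving_comp_perm {κ E : Type*} [Fintype κ] [MeasurableSpace E]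
    (ν : Measure E) [SigmaFinite ν] (e : Equiv.Perm κ) :
    MeasurePreserving (fun p : κ → E => p ∘ e) (Measure.pi fun _ => ν) (Measure.pi fun _ => ν) := by
  convert measurePreserving_piCongrLeft (fun _ : κ => ν) e.symm using 1
  ext p i
  simp [MeasurableEquiv.coe_piCongrLeft, Equiv.piCongrLeft_apply]

def meanAbsDev {Ω : Type*} [MeasurableSpace Ω] (P : Measure Ω) (X : Ω → ℝ) : ℝ :=
  ∫ ω, |X ω - ∫ ω', X ω' ∂P| ∂P

lemma sq_meanAbsDev_le_variance {Ω : Type*} [MeasurableSpace Ω] {P : Measure Ω}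
    [IsProbabilityMeasure P] {X : Ω → ℝ} (hX : MemLp X 2 P) :
    meanAbsDev P X ^ 2 ≤ Var[X; P] := by
  have hY : MemLp (fun ω => |X ω - ∫ ω', X ω' ∂P|) 2 P := (hX.sub (memLp_const _)).abs
  have := variance_nonneg (fun ω => |X ω - ∫ ω', X ω' ∂P|) P
  rw [variance_eq_sub hY] at this
  rw [meanAbsDev, variance_eq_integral hX.aestronglyMeasurable.aemeasurable]
  simpa [sq_abs, Pi.pow_apply] using this

section EfronStein

variable {ι E : Type*} [DecidableEq ι]

def hybrid (s : Finset ι) (p : ι ⊕ ι → E) : ι → E :=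
  s.piecewise (fun i => p (.inr i)) (fun i => p (.inl i))

lemma hybrid_empty (p : ι ⊕ ι → E) : hybrid ∅ p = fun i => p (.inl i) := by
  simp [hybrid]

lemma hybrid_univ [Fintype ι] (p : ι ⊕ ι → E) : hybrid Finset.univ p = fun i => p (.inr i) := by
  simp [hybrid]

lemma hybrid_insert (s : Finset ι) (k : ι) (p : ι ⊕ ι → E) :
    hybrid (insert k s) p = Function.update (hybrid s p) k (p (.inr k)) :=
  Finset.piecewise_insert s _ _ k

lemma hybrid_apply_of_notMem {s : Finset ι} {k : ι} (hk : k ∉ s) (p : ι ⊕ ι → E) :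
    hybrid s p k = p (.inl k) :=
  Finset.piecewise_eq_of_notMem _ _ _ hk

lemma hybrid_comp_swap {s : Finset ι} {k : ι} (hk : k ∉ s) (p : ι ⊕ ι → E) :
    hybrid s (p ∘ Equiv.swap (.inl k) (.inr k)) = hybrid (insert k s) p := by
  ext i
  by_cases hik : i = k
  · subst hik
    simp [hybrid, hk]
  · by_cases his : i ∈ s <;> simp [hybrid, his, hik, Equiv.swap_apply_of_ne_of_ne]

lemma hybrid_insert_comp_swap {s : Finset ι} {k : ι} (hk : k ∉ s) (p : ι ⊕ ι → E) :
    hybrid (insert k s) (p ∘ Equiv.swap (.inl k) (.inr k)) = hybrid s p := by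
  rw [← hybrid_comp_swap hk]
  congr 1
  ext c
  simp

lemma abs_sub_hybrid_insert_le {F : (ι → ℝ) → ℝ} {L : ℝ}
    (hL : ∀ x k t, |F (Function.update x k t) - F x| ≤ L * |t - x k|)
    {s : Finset ι} {k : ι} (hk : k ∉ s) (p : ι ⊕ ι → ℝ) :
    |F (hybrid s p) - F (hybrid (insert k s) p)| ≤ L * |p (.inl k) - p (.inr k)| := by
  have := hL (hybrid s p) k (p (.inr k))
  rwa [← hybrid_insert, abs_sub_comm, hybrid_apply_of_notMem hk, abs_sub_comm (p _)] at this

variable [Fintype ι] [MeasurableSpace E] (ν : Measure E) [IsProbabilityMeasure ν]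

lemma measurePreserving_hybrid (s : Finset ι) :
    MeasurePreserving (hybrid s) (Measure.pi fun _ : ι ⊕ ι => ν) (Measure.pi fun _ : ι => ν) := by
  induction s using Finset.induction_on with
  | empty =>
    have : hybrid (∅ : Finset ι) = fun p : ι ⊕ ι → E => (MeasurableEquiv.sumPiEquivProdPi _ p).1 :=
      funext hybrid_empty
    rw [this]
    exact measurePreserving_fst.comp (measurePreserving_sumPiEquivProdPi fun _ => ν)
  | insert k s hk ih =>
    have : hybrid (insert k s) = hybrid s ∘ fun p : ι ⊕ ι → E => p ∘ Equiv.swap (.inl k) (.inr k) :=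
      funext fun p => (hybrid_comp_swap hk p).symm
    rw [this]
    exact ih.comp (measurePreserving_comp_perm ν _)

lemma integral_mul_hybrid_univ (F : (ι → E) → ℝ) :
    ∫ p, F (hybrid ∅ p) * F (hybrid Finset.univ p) ∂(Measure.pi fun _ : ι ⊕ ι => ν)
      = (∫ x, F x ∂(Measure.pi fun _ => ν)) ^ 2 := by
  simp only [hybrid_empty, hybrid_univ]
  rw [sq, ← integral_prod_mul]
  exact (measurePreserving_sumPiEquivProdPi fun _ : ι ⊕ ι => ν).integral_comp'
    (fun q => F q.1 * F q.2)

end EfronStein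

section CoordinatewiseLipschitz

variable {ι : Type*} [Fintype ι] [DecidableEq ι] {ν : Measure ℝ} [IsProbabilityMeasure ν]

lemma integral_sq_eval_sub_eval_le {κ : Type*} [Fintype κ] (hν : MemLp id 2 ν) (i j : κ) :
    ∫ p, (p i - p j) ^ 2 ∂(Measure.pi fun _ : κ => ν) ≤ 4 * ∫ x, x ^ 2 ∂ν := by
  have hev : ∀ c, MemLp (fun p : κ → ℝ => p c) 2 (Measure.pi fun _ => ν) := fun c =>
    hν.comp_measurePreserving (measurePreserving_eval _ c)
  have hsq : ∀ c, ∫ p, p c ^ 2 ∂(Measure.pi fun _ : κ => ν) = ∫ x, x ^ 2 ∂ν := fun c =>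
    (measurePreserving_eval (fun _ : κ => ν) c).integral_comp_of_aestronglyMeasurable
      (f := fun x : ℝ => x ^ 2) (by fun_prop)
  calc ∫ p, (p i - p j) ^ 2 ∂(Measure.pi fun _ : κ => ν)
      ≤ ∫ p, (2 * p i ^ 2 + 2 * p j ^ 2) ∂(Measure.pi fun _ : κ => ν) :=
        integral_mono ((hev i).sub (hev j)).integrable_sq
          (((hev i).integrable_sq.const_mul 2).add ((hev j).integrable_sq.const_mul 2))
          fun p => by nlinarith [sq_nonneg (p i + p j)]
    _ = 4 * ∫ x, x ^ 2 ∂ν := by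
        rw [integral_add ((hev i).integrable_sq.const_mul 2) ((hev j).integrable_sq.const_mul 2),
          integral_const_mul, integral_const_mul, hsq, hsq]
        ring

variable {F : (ι → ℝ) → ℝ} {L : ℝ}

/-- Exchanging the two copies of coordinate `k` preserves the product measure and swaps the hybrids
at `s` and `insert k s`; this turns one telescoping increment into half the integral of a product
of two differences in the `k`-th coordinate. -/
lemma integral_mul_hybrid_sub_integral_mul_hybrid_insert_le (hν : MemLp id 2 ν)
    (hF : MemLp F 2 (Measure.pi fun _ => ν))
    (hL : ∀ x k t, |F (Function.update x k t) - F x| ≤ L * |t - x k|)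
    {s : Finset ι} {k : ι} (hk : k ∉ s) :
    ∫ p, F (hybrid ∅ p) * F (hybrid s p) ∂(Measure.pi fun _ => ν)
      - ∫ p, F (hybrid ∅ p) * F (hybrid (insert k s) p) ∂(Measure.pi fun _ => ν)
      ≤ 2 * L ^ 2 * ∫ x, x ^ 2 ∂ν := by
  set P := Measure.pi fun _ : ι ⊕ ι => ν
  have hsw := measurePreserving_comp_perm ν (Equiv.swap (Sum.inl k : ι ⊕ ι) (.inr k))
  have hFh : ∀ s, MemLp (fun p => F (hybrid s p)) 2 P := fun s =>
    hF.comp_measurePreserving (measurePreserving_hybrid ν s)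
  have hint : ∀ s, Integrable (fun p => F (hybrid ∅ p) * F (hybrid s p)) P := fun s =>
    (hFh ∅).integrable_mul (hFh s)
  rw [← integral_sub (hint s) (hint _)]
  simp only [← mul_sub]
  set D := fun p => F (hybrid s p) - F (hybrid (insert k s) p)
  have hD : ∀ p, D (p ∘ Equiv.swap (.inl k) (.inr k)) = -D p := fun p => by
    simp only [D, hybrid_comp_swap hk, hybrid_insert_comp_swap hk, neg_sub]
  have htwice := two_mul_integral_mul_eq_of_comp_eq_neg hsw hD ((hFh ∅).integrable_mul
    ((hFh s).sub (hFh _)))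
  simp only [hybrid_comp_swap (Finset.notMem_empty k)] at htwice
  have hsq : Integrable (fun p : ι ⊕ ι → ℝ => (p (.inl k) - p (.inr k)) ^ 2) P :=
    ((hν.comp_measurePreserving (measurePreserving_eval _ _)).sub
      (hν.comp_measurePreserving (measurePreserving_eval _ _))).integrable_sq
  suffices ∫ p, (F (hybrid ∅ p) - F (hybrid (insert k ∅) p)) * D p ∂P
      ≤ L ^ 2 * (4 * ∫ x, x ^ 2 ∂ν) by linarith
  calc ∫ p, (F (hybrid ∅ p) - F (hybrid (insert k ∅) p)) * D p ∂P
      ≤ ∫ p, L ^ 2 * (p (.inl k) - p (.inr k)) ^ 2 ∂P := by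
        refine integral_mono (((hFh ∅).sub (hFh _)).integrable_mul ((hFh s).sub (hFh _)))
          (hsq.const_mul _) fun p => (le_abs_self _).trans ?_
        have hG := abs_sub_hybrid_insert_le hL (Finset.notMem_empty k) p
        have hD := abs_sub_hybrid_insert_le hL hk p
        rw [abs_mul, ← sq_abs (p _ - p _)]
        nlinarith [mul_le_mul hG hD (abs_nonneg _) ((abs_nonneg _).trans hG)]
    _ ≤ L ^ 2 * (4 * ∫ x, x ^ 2 ∂ν) := by
        rw [integral_const_mul]
        exact mul_le_mul_of_nonneg_left (integral_sq_eval_sub_eval_le hν _ _) (sq_nonneg L)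

/-- **Efron–Stein inequality** for coordinatewise Lipschitz functions: telescope
`Var F = E[F(X) F(X)] - E[F(X) F(Y)]` along the hybrids between two independent copies. -/
theorem variance_le_of_abs_update_sub_le (hν : MemLp id 2 ν)
    (hF : MemLp F 2 (Measure.pi fun _ => ν))
    (hL : ∀ x k t, |F (Function.update x k t) - F x| ≤ L * |t - x k|) :
    Var[F; Measure.pi fun _ => ν] ≤ 2 * Fintype.card ι * L ^ 2 * ∫ x, x ^ 2 ∂ν := by
  set P := Measure.pi fun _ : ι ⊕ ι => ν
  have htelescope : ∀ s : Finset ι,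
      ∫ p, F (hybrid ∅ p) * F (hybrid ∅ p) ∂P - ∫ p, F (hybrid ∅ p) * F (hybrid s p) ∂P
        ≤ s.card * (2 * L ^ 2 * ∫ x, x ^ 2 ∂ν) := by
    intro s
    induction s using Finset.induction_on with
    | empty => simp
    | insert k s hk ih =>
      rw [Finset.card_insert_of_notMem hk]
      have := integral_mul_hybrid_sub_integral_mul_hybrid_insert_le hν hF hL hk
      push_cast
      linarith
  have hsq : ∫ p, F (hybrid ∅ p) * F (hybrid ∅ p) ∂P = ∫ x, F x ^ 2 ∂(Measure.pi fun _ => ν) := by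
    simp only [← sq]
    exact (measurePreserving_hybrid ν ∅).integral_comp_of_aestronglyMeasurable
      (f := fun x => F x ^ 2) (hF.aestronglyMeasurable.pow 2)
  rw [variance_eq_sub hF, ← integral_mul_hybrid_univ ν F]
  have := htelescope Finset.univ
  rw [hsq, Finset.card_univ] at this
  simp only [Pi.pow_apply]
  linarith

end CoordinatewiseLipschitz

section Disorder

variable {ι τ : Type*} [Fintype ι]

def energy (f : ι → τ → ℝ) (x : ι → ℝ) (σ : τ) : ℝ := ∑ α, x α * f α σ

variable {f : ι → τ → ℝ}

lemma abs_energy_le (hf : ∀ α σ, |f α σ| ≤ 1) (x : ι → ℝ) (σ : τ) :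
    |energy f x σ| ≤ ∑ α, |x α| :=
  (Finset.abs_sum_le_sum_abs _ _).trans <| Finset.sum_le_sum fun α _ => by
    rw [abs_mul]; exact mul_le_of_le_one_right (abs_nonneg _) (hf α σ)

lemma energy_update_sub [DecidableEq ι] (x : ι → ℝ) (k : ι) (t : ℝ) (σ : τ) :
    energy f (Function.update x k t) σ - energy f x σ = (t - x k) * f k σ := by
  rw [energy, energy, ← Finset.sum_sub_distrib, Finset.sum_eq_single k]
  · simp [sub_mul]
  · intro α _ hα; simp [hα]
  · simp

variable [Fintype τ]

def logPartition (κ : τ → ℝ) (f : ι → τ → ℝ) (γ : ℝ) (x : ι → ℝ) : ℝ :=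
  Real.log (partitionFn κ (energy f x) γ)

variable {κ : τ → ℝ} (hκ0 : ∀ σ, 0 ≤ κ σ) (hκ1 : ∑ σ, κ σ = 1) (hf : ∀ α σ, |f α σ| ≤ 1)
include hκ0 hκ1 hf

lemma abs_logPartition_update_sub_le [DecidableEq ι] (γ : ℝ) (x : ι → ℝ) (k : ι) (t : ℝ) :
    |logPartition κ f γ (Function.update x k t) - logPartition κ f γ x| ≤ |γ| * |t - x k| := by
  refine abs_log_partitionFn_sub_le hκ0 hκ1 (fun σ => ?_) γ
  rw [energy_update_sub, abs_mul]
  exact mul_le_of_le_one_right (abs_nonneg _) (hf k σ)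

variable {ν : Measure ℝ} [IsProbabilityMeasure ν] (hν : MemLp id 2 ν)
include hν

lemma memLp_logPartition (γ : ℝ) :
    MemLp (logPartition κ f γ) 2 (Measure.pi fun _ : ι => ν) := by
  have hcoord : ∀ α, MemLp (fun x : ι → ℝ => |x α|) 2 (Measure.pi fun _ => ν) := fun α =>
    (hν.comp_measurePreserving (measurePreserving_eval (fun _ => ν) α)).abs
  have hsum : MemLp (fun x : ι → ℝ => |γ| * ∑ α, |x α|) 2 (Measure.pi fun _ => ν) :=
    (memLp_finsetSum _ fun α _ => hcoord α).const_mul _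
  have hmeas : Measurable (logPartition κ f γ) := by
    unfold logPartition partitionFn energy
    fun_prop
  refine hsum.of_le hmeas.aestronglyMeasurable (.of_forall fun x => ?_)
  rw [Real.norm_eq_abs, Real.norm_eq_abs, abs_of_nonneg (a := |γ| * ∑ α, |x α|) (by positivity)]
  exact abs_log_partitionFn_le hκ0 hκ1 (abs_energy_le hf x) γ

lemma variance_logPartition_le [DecidableEq ι] (γ : ℝ) :
    Var[logPartition κ f γ; Measure.pi fun _ : ι => ν]
      ≤ 2 * Fintype.card ι * γ ^ 2 * ∫ x, x ^ 2 ∂ν := by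
  simpa [sq_abs] using variance_le_of_abs_update_sub_le hν (memLp_logPartition hκ0 hκ1 hf hν γ)
    (abs_logPartition_update_sub_le hκ0 hκ1 hf γ)

end Disorder

lemma tendsto_nhds_zero_of_forall_le_of_tendsto {α β : Type*} {la : Filter α} {lb : Filter β}
    [lb.NeBot] {T : α → ℝ} {b : β → α → ℝ} {h : β → ℝ} (hT : ∀ a, 0 ≤ T a)
    (hTb : ∀ᶠ δ in lb, ∀ a, T a ≤ b δ a) (hb : ∀ᶠ δ in lb, Tendsto (b δ) la (𝓝 (h δ)))
    (hh : Tendsto h lb (𝓝 0)) : Tendsto T la (𝓝 0) := by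
  refine tendsto_order.2 ⟨fun c hc => .of_forall fun a => hc.trans_le (hT a), fun c hc => ?_⟩
  obtain ⟨δ, hTδ, hbδ, hhδ⟩ := (hTb.and (hb.and (hh.eventually (gt_mem_nhds hc)))).exists
  exact (hbδ.eventually (gt_mem_nhds hhδ)).mono fun a ha => (hTδ a).trans_lt ha

lemma ConvexOn.slope_le_and_le_slope_of_hasDerivAt {f : ℝ → ℝ} {f' x δ : ℝ}
    (hf : ConvexOn ℝ univ f) (hf' : HasDerivAt f f' x) (hδ : 0 < δ) :
    slope f x (x - δ) ≤ f' ∧ f' ≤ slope f x (x + δ) :=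
  ⟨slope_comm f x (x - δ) ▸ hf.slope_le_of_hasDerivAt (mem_univ _) (mem_univ _) (by linarith) hf',
    hf.le_slope_of_hasDerivAt (mem_univ _) (mem_univ _) (by linarith) hf'⟩

section Concentration

variable {Ω : Type*} [MeasurableSpace Ω] {P : Measure Ω} [IsProbabilityMeasure P]

lemma meanAbsDev_le_two_mul_integral_abs_sub {Y : Ω → ℝ} (hY : Integrable Y P) (c : ℝ) :
    meanAbsDev P Y ≤ 2 * ∫ ω, |Y ω - c| ∂P := by
  have hYc : Integrable (fun ω => |Y ω - c|) P := (hY.sub (integrable_const c)).abs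
  have hmean : |c - ∫ ω, Y ω ∂P| ≤ ∫ ω, |Y ω - c| ∂P := by
    rw [abs_sub_comm]
    calc |∫ ω, Y ω ∂P - c| = |∫ ω, (Y ω - c) ∂P| := by
          rw [integral_sub hY (integrable_const c), integral_const, probReal_univ, one_smul]
      _ ≤ ∫ ω, |Y ω - c| ∂P := abs_integral_le_integral_abs
  calc meanAbsDev P Y ≤ ∫ ω, (|Y ω - c| + |c - ∫ ω', Y ω' ∂P|) ∂P :=
        integral_mono (hY.sub (integrable_const _)).abs (hYc.add (integrable_const _))
          fun ω => abs_sub_le _ _ _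
    _ ≤ 2 * ∫ ω, |Y ω - c| ∂P := by
        rw [integral_add hYc (integrable_const _), integral_const, probReal_univ, one_smul]
        linarith

lemma integral_abs_slope_sub_le {u : ℝ → Ω → ℝ} (hu : ∀ γ, Integrable (u γ) P) (a b c : ℝ) :
    ∫ ω, |slope (u · ω) a b - c| ∂P ≤ (meanAbsDev P (u a) + meanAbsDev P (u b)) / |b - a|
      + |slope (fun γ => ∫ ω, u γ ω ∂P) a b - c| := by
  set m := fun γ => ∫ ω, u γ ω ∂P
  have hdev : ∀ γ, Integrable (fun ω => |u γ ω - m γ|) P := fun γ =>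
    ((hu γ).sub (integrable_const _)).abs
  have hpt : ∀ ω, |slope (u · ω) a b - c|
      ≤ (|u a ω - m a| + |u b ω - m b|) / |b - a| + |slope m a b - c| := by
    intro ω
    have hsplit : slope (u · ω) a b - c
        = ((u b ω - m b) - (u a ω - m a)) / (b - a) + (slope m a b - c) := by
      simp only [slope_def_field]
      ring
    rw [hsplit]
    refine (abs_add_le _ _).trans (add_le_add_left ?_ _)
    rw [abs_div]
    exact div_le_div_of_nonneg_right ((abs_sub _ _).trans_eq (add_comm _ _)) (abs_nonneg _)
  have hsum : Integrable (fun ω => (|u a ω - m a| + |u b ω - m b|) / |b - a|) P :=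
    ((hdev a).add (hdev b)).div_const _
  calc ∫ ω, |slope (u · ω) a b - c| ∂P
      ≤ ∫ ω, ((|u a ω - m a| + |u b ω - m b|) / |b - a| + |slope m a b - c|) ∂P :=
        integral_mono_of_nonneg (.of_forall fun _ => abs_nonneg _)
          (hsum.add (integrable_const _)) (.of_forall hpt)
    _ = _ := by
        rw [integral_add hsum (integrable_const _), integral_div,
          integral_add (hdev a) (hdev b), integral_const, probReal_univ, one_smul]
        rfl

lemma meanAbsDev_le_of_convexOn {ψ : ℝ → Ω → ℝ} {Y : Ω → ℝ} {γ₀ δ : ℝ}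
    (hconv : ∀ ω, ConvexOn ℝ univ (ψ · ω)) (hderiv : ∀ ω, HasDerivAt (ψ · ω) (Y ω) γ₀)
    (hY : AEStronglyMeasurable Y P) (hψ : ∀ γ, Integrable (ψ γ) P) (hδ : 0 < δ) (c : ℝ) :
    meanAbsDev P Y ≤ 2 * ((2 * meanAbsDev P (ψ γ₀) + meanAbsDev P (ψ (γ₀ - δ))
      + meanAbsDev P (ψ (γ₀ + δ))) / δ + |slope (fun γ => ∫ ω, ψ γ ω ∂P) γ₀ (γ₀ - δ) - c|
      + |slope (fun γ => ∫ ω, ψ γ ω ∂P) γ₀ (γ₀ + δ) - c|) := by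
  have hsand := fun ω => (hconv ω).slope_le_and_le_slope_of_hasDerivAt (hderiv ω) hδ
  have hslope : ∀ y, Integrable (fun ω => slope (ψ · ω) γ₀ y) P := fun y => by
    simp only [slope_def_field]
    exact ((hψ y).sub (hψ γ₀)).div_const _
  have hbetween : ∀ ω c, |Y ω - c|
      ≤ |slope (ψ · ω) γ₀ (γ₀ - δ) - c| + |slope (ψ · ω) γ₀ (γ₀ + δ) - c| := fun ω c =>
    (abs_le_max_abs_abs (sub_le_sub_right (hsand ω).1 c) (sub_le_sub_right (hsand ω).2 c)).trans
      (max_le_add_of_nonneg (abs_nonneg _) (abs_nonneg _))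
  have hYi : Integrable Y P :=
    ((hslope _).abs.add (hslope _).abs).mono' hY (.of_forall fun ω => by simpa using hbetween ω 0)
  have hdev : ∀ y, Integrable (fun ω => |slope (ψ · ω) γ₀ y - c|) P := fun y =>
    ((hslope y).sub (integrable_const c)).abs
  have hlo := integral_abs_slope_sub_le hψ γ₀ (γ₀ - δ) c
  have hhi := integral_abs_slope_sub_le hψ γ₀ (γ₀ + δ) c
  rw [show γ₀ - δ - γ₀ = -δ by ring, abs_neg, abs_of_pos hδ] at hlo
  rw [add_sub_cancel_left, abs_of_pos hδ] at hhi
  calc meanAbsDev P Y ≤ 2 * ∫ ω, |Y ω - c| ∂P := meanAbsDev_le_two_mul_integral_abs_sub hYi c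
    _ ≤ 2 * ∫ ω, (|slope (ψ · ω) γ₀ (γ₀ - δ) - c| + |slope (ψ · ω) γ₀ (γ₀ + δ) - c|) ∂P :=
        mul_le_mul_of_nonneg_left (integral_mono_of_nonneg (.of_forall fun _ => abs_nonneg _)
          ((hdev _).add (hdev _)) (.of_forall fun ω => hbetween ω c)) zero_le_two
    _ ≤ _ := by
        rw [integral_add (hdev _) (hdev _)]
        have : (2 * meanAbsDev P (ψ γ₀) + meanAbsDev P (ψ (γ₀ - δ)) + meanAbsDev P (ψ (γ₀ + δ))) / δ
            = (meanAbsDev P (ψ γ₀) + meanAbsDev P (ψ (γ₀ - δ))) / δ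
              + (meanAbsDev P (ψ γ₀) + meanAbsDev P (ψ (γ₀ + δ))) / δ := by ring
        linarith

theorem tendsto_meanAbsDev_of_convexOn {ψ : ℕ → ℝ → Ω → ℝ} {Y : ℕ → Ω → ℝ}
    {p : ℝ → ℝ} {γ₀ p' ε : ℝ} (hε : 0 < ε)
    (hconv : ∀ N ω, ConvexOn ℝ univ (ψ N · ω))
    (hderiv : ∀ N ω, HasDerivAt (ψ N · ω) (Y N ω) γ₀)
    (hY : ∀ N, AEStronglyMeasurable (Y N) P) (hψ : ∀ N γ, Integrable (ψ N γ) P)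
    (hconc : ∀ γ ∈ Ioo (γ₀ - ε) (γ₀ + ε), Tendsto (fun N => meanAbsDev P (ψ N γ)) atTop (𝓝 0))
    (hlim : ∀ γ ∈ Ioo (γ₀ - ε) (γ₀ + ε), Tendsto (fun N => ∫ ω, ψ N γ ω ∂P) atTop (𝓝 (p γ)))
    (hd : HasDerivAt p p' γ₀) :
    Tendsto (fun N => meanAbsDev P (Y N)) atTop (𝓝 0) := by
  have hslope := hasDerivAt_iff_tendsto_slope.1 hd
  have hminus : Tendsto (fun δ => γ₀ - δ) (𝓝[>] 0) (𝓝[≠] γ₀) :=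
    tendsto_nhdsWithin_iff.2 ⟨((continuous_sub_left γ₀).tendsto' 0 γ₀ (sub_zero γ₀)).mono_left
      nhdsWithin_le_nhds, eventually_nhdsWithin_of_forall fun δ (hδ : 0 < δ) => by simp [hδ.ne']⟩
  have hplus : Tendsto (fun δ => γ₀ + δ) (𝓝[>] 0) (𝓝[≠] γ₀) :=
    tendsto_nhdsWithin_iff.2 ⟨((continuous_const_add γ₀).tendsto' 0 γ₀ (add_zero γ₀)).mono_left
      nhdsWithin_le_nhds, eventually_nhdsWithin_of_forall fun δ (hδ : 0 < δ) => by simp [hδ.ne']⟩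
  have hmean : ∀ y ∈ Ioo (γ₀ - ε) (γ₀ + ε), Tendsto
      (fun N => |slope (fun γ => ∫ ω, ψ N γ ω ∂P) γ₀ y - p'|) atTop (𝓝 |slope p γ₀ y - p'|) :=
    fun y hy => (((hlim y hy).sub (hlim γ₀ ⟨by linarith [hy.1], by linarith [hy.2]⟩)).const_smul
      (y - γ₀)⁻¹ |>.sub_const p').abs
  refine tendsto_nhds_zero_of_forall_le_of_tendsto (lb := 𝓝[>] 0)
    (h := fun δ => 2 * (|slope p γ₀ (γ₀ - δ) - p'| + |slope p γ₀ (γ₀ + δ) - p'|))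
    (fun N => integral_nonneg fun _ => abs_nonneg _)
    (eventually_mem_nhdsWithin.mono fun δ hδ N =>
      meanAbsDev_le_of_convexOn (hconv N) (hderiv N) (hY N) (hψ N) hδ p')
    (eventually_of_mem (Ioo_mem_nhdsGT hε) fun δ hδ => ?_) ?_
  · have hγ₀ : γ₀ ∈ Ioo (γ₀ - ε) (γ₀ + ε) := ⟨by linarith, by linarith⟩
    have hlo : γ₀ - δ ∈ Ioo (γ₀ - ε) (γ₀ + ε) := ⟨by linarith [hδ.2], by linarith [hδ.1]⟩
    have hhi : γ₀ + δ ∈ Ioo (γ₀ - ε) (γ₀ + ε) := ⟨by linarith [hδ.1], by linarith [hδ.2]⟩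
    convert (((((hconc _ hγ₀).const_mul 2).add (hconc _ hlo)).add (hconc _ hhi)).div_const δ
      |>.add (hmean _ hlo) |>.add (hmean _ hhi)).const_mul 2 using 2
    ring
  · simpa using ((((hslope.comp hminus).sub_const p').abs.add
      ((hslope.comp hplus).sub_const p').abs).const_mul 2)

end Concentration

lemma measurePreserving_pi_of_iIndepFun {Ω ι E : Type*} [Fintype ι] [MeasurableSpace Ω]
    [MeasurableSpace E] {P : Measure Ω} [IsProbabilityMeasure P] {ν : Measure E}
    {g : ι → Ω → E} (hgm : ∀ α, Measurable (g α)) (hlaw : ∀ α, P.map (g α) = ν)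
    (hind : iIndepFun g P) :
    MeasurePreserving (fun ω α => g α ω) P (Measure.pi fun _ => ν) :=
  ⟨measurable_pi_lambda _ hgm, by
    rw [hind.map_fun_eq_pi_map fun α => (hgm α).aemeasurable]
    simp only [hlaw]⟩

theorem tendsto_meanAbsDev_logPartition {Ω : Type*} [MeasurableSpace Ω]
    {P : Measure Ω} [IsProbabilityMeasure P] {ν : Measure ℝ} [IsProbabilityMeasure ν]
    (hν : MemLp id 2 ν) {τ : ℕ → Type*} [∀ N, Fintype (τ N)] {A : ℕ → ℕ} {C : ℝ}
    (hA : ∀ N, (A N : ℝ) ≤ C * N) {κ : ∀ N, τ N → ℝ} (hκ0 : ∀ N σ, 0 ≤ κ N σ)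
    (hκ1 : ∀ N, ∑ σ, κ N σ = 1) {f : ∀ N, Fin (A N) → τ N → ℝ} (hf : ∀ N α σ, |f N α σ| ≤ 1)
    {g : ∀ N, Fin (A N) → Ω → ℝ}
    (hg : ∀ N, MeasurePreserving (fun ω α => g N α ω) P (Measure.pi fun _ => ν)) (γ : ℝ) :
    Tendsto (fun N : ℕ => meanAbsDev P
      fun ω => (1 / (N : ℝ)) * logPartition (κ N) (f N) γ (fun α => g N α ω)) atTop (𝓝 0) := by
  set c := 2 * C * γ ^ 2 * ∫ x, x ^ 2 ∂ν
  have hvar : ∀ N : ℕ,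
      Var[fun ω => (1 / (N : ℝ)) * logPartition (κ N) (f N) γ (fun α => g N α ω); P] ≤ c / N := by
    intro N
    have hES := variance_logPartition_le (hκ0 N) (hκ1 N) (hf N) hν γ
    rw [Fintype.card_fin] at hES
    rw [variance_const_mul, (hg N).variance_fun_comp
      (memLp_logPartition (hκ0 N) (hκ1 N) (hf N) hν γ).aestronglyMeasurable.aemeasurable]
    calc (1 / (N : ℝ)) ^ 2 * Var[logPartition (κ N) (f N) γ; Measure.pi fun _ => ν]
        ≤ (1 / (N : ℝ)) ^ 2 * (2 * (C * N) * γ ^ 2 * ∫ x, x ^ 2 ∂ν) := by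
          gcongr
          exact hES.trans (by gcongr; exact hA N)
      _ = c / N := by
          rcases Nat.eq_zero_or_pos N with rfl | hN
          · simp
          · field_simp
            rfl
  refine squeeze_zero (g := fun N : ℕ => Real.sqrt (c / N))
    (fun N => integral_nonneg fun _ => abs_nonneg _) (fun N => ?_)
    (by simpa using (tendsto_const_div_atTop_nhds_zero_nat c).sqrt)
  refine (le_abs_self _).trans (Real.abs_le_sqrt ((sq_meanAbsDev_le_variance ?_).trans (hvar N)))
  exact ((memLp_logPartition (hκ0 N) (hκ1 N) (hf N) hν γ).comp_measurePreserving (hg N)).const_mul _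

end

theorem gibbs_average_concentrates {Ω : Type*} [MeasureSpace Ω]
    [IsProbabilityMeasure (ℙ : Measure Ω)]
    (μ : (N : ℕ) → (Fin N → Bool) → ℝ)
    (hμ0 : ∀ N σ, 0 ≤ μ N σ) (hμ1 : ∀ N, ∑ σ, μ N σ = 1)
    (A : ℕ → ℕ) (C : ℝ) (hA : ∀ N, (A N : ℝ) ≤ C * N)
    (f : (N : ℕ) → Fin (A N) → (Fin N → Bool) → ℝ)
    (hf : ∀ N α σ, |f N α σ| ≤ 1)
    (g : (N : ℕ) → Fin (A N) → Ω → ℝ)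
    (hgm : ∀ N α, Measurable (g N α))
    (hglaw : ∀ N α, Measure.map (g N α) ℙ = gaussianReal 0 1)
    (hgindep : ∀ N, iIndepFun (β := fun _ : Fin (A N) => ℝ) (g N) ℙ)
    (γ₀ p' : ℝ) (p : ℝ → ℝ) (ε : ℝ) (hε : 0 < ε)
    (hp : ∀ γ ∈ Set.Ioo (γ₀ - ε) (γ₀ + ε),
      Tendsto (fun N : ℕ => ∫ ω, (1 / (N : ℝ)) *
          Real.log (∑ σ, μ N σ * Real.exp (γ * ∑ α, g N α ω * f N α σ)))
        atTop (𝓝 (p γ)))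
    (hd : HasDerivAt p p' γ₀) :
    let w : (N : ℕ) → Ω → (Fin N → Bool) → ℝ :=
      fun N ω σ => μ N σ * Real.exp (γ₀ * ∑ α, g N α ω * f N α σ)
    let avgH : (N : ℕ) → Ω → ℝ := fun N ω =>
      (∑ σ, w N ω σ * ((1 / (N : ℝ)) * ∑ α, g N α ω * f N α σ)) / (∑ σ, w N ω σ)
    Tendsto (fun N => ∫ ω, |avgH N ω - ∫ ω', avgH N ω'|) atTop (𝓝 0) := by
  intro w avgH
  have hG := fun N => measurePreserving_pi_of_iIndepFun (hgm N) (hglaw N) (hgindep N)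
  have hν : MemLp id 2 (gaussianReal 0 1) := memLp_id_gaussianReal 2
  refine tendsto_meanAbsDev_of_convexOn
    (ψ := fun N γ ω => (1 / (N : ℝ)) * logPartition (μ N) (f N) γ (fun α => g N α ω))
    hε (fun N ω => ?_) (fun N ω => ?_) (fun N => ?_) (fun N γ => ?_)
    (fun γ _ => tendsto_meanAbsDev_logPartition hν hA hμ0 hμ1 hf hG γ) hp hd
  · exact (convexOn_log_partitionFn (hμ0 N) (hμ1 N) _).smul (by positivity)
  · have h := gibbsAvg_const_mul (μ N) (energy (f N) fun α => g N α ω) γ₀ (1 / (N : ℝ))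
      (energy (f N) fun α => g N α ω)
    exact ((hasDerivAt_log_partitionFn (hμ0 N) (hμ1 N) _ γ₀).const_mul _).congr_deriv h.symm
  · simp only [avgH, w]
    exact Measurable.aestronglyMeasurable (by fun_prop)
  · exact (((memLp_logPartition (hμ0 N) (hμ1 N) (hf N) hν γ).comp_measurePreserving
      (hG N)).integrable one_le_two).const_mul _
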